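/- For 1 ≤ d ≤ (n-3)/2, the sequence A(n,d,1), A(n,d,2), ..., A(n,d,n) is strictly decreasing: A(n,d,n) < A(n,d,n-1) < ... < A(n,d,1). -/

import Mathlib

/-!
Deleting the first value of a permutation gives
`A(n+1, d, c+1) = ∑_{j < c} A(n, d-1, j+1) + ∑_{c ≤ j < n} A(n, d, j+1)`, hence
`A(n+1, d, c+2) = A(n+1, d, c+1) - D(n, d, c)` with `D(n, d, j) = A(n, d, j+1) - A(n, d-1, j+1)`.
So it suffices that `D(n, d, j) > 0` whenever `1 ≤ d` and `2d + 2 ≤ n`.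
The same recursion writes `D(n+1, d, ·)` through a prefix sum of `D(n, d-1, ·)` and a suffix
sum of `D(n, d, ·)`. Complementing values (`π ↦ rev ∘ π`) makes `D(n, d, ·)` antisymmetric when
`n = 2d`, which keeps the suffix sums nonnegative in that borderline case. Induction on `n` gives
first `D(n, d, j) ≥ 0` for `2d < n`, then strict positivity.
-/

open Finset

/-- Number of descents of a permutation of `Fin n` (positions `i` with `π(i) > π(i+1)`). -/
def descents (n : ℕ) (π : Equiv.Perm (Fin n)) : ℕ :=
  (Finset.univ.filter (fun i : Fin n =>
    ∃ j : Fin n, (j : ℕ) = (i : ℕ) + 1 ∧ π j < π i)).card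

/-- `A n d k` : number of permutations of `{1,…,n}` with exactly `d` descents and first value `k`
(1-based values; `d : ℤ`, so `A n d k = 0` when `d < 0`). -/
def A (n : ℕ) (d : ℤ) (k : ℕ) : ℕ :=
  (Finset.univ.filter (fun π : Equiv.Perm (Fin n) =>
    (descents n π : ℤ) = d ∧ ∃ i : Fin n, (i : ℕ) = 0 ∧ (π i : ℕ) + 1 = k)).card

/-- `Alast n d k` : number with `d` descents and last value `k`. -/
def Alast (n : ℕ) (d : ℤ) (k : ℕ) : ℕ :=
  (Finset.univ.filter (fun π : Equiv.Perm (Fin n) =>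
    (descents n π : ℤ) = d ∧ ∃ i : Fin n, (i : ℕ) + 1 = n ∧ (π i : ℕ) + 1 = k)).card

/-- Eulerian number: permutations of `{1,…,n}` with `d` descents. -/
def Eul (n : ℕ) (d : ℤ) : ℕ :=
  (Finset.univ.filter (fun π : Equiv.Perm (Fin n) => (descents n π : ℤ) = d)).card

open Equiv

lemma descents_succ_eq_sum {m : ℕ} (π : Perm (Fin (m + 1))) :
    descents (m + 1) π = ∑ i : Fin m, if π i.succ < π i.castSucc then 1 else 0 := by
  rw [descents, card_filter, Fin.sum_univ_castSucc]
  have hsucc (i : Fin m) (j : Fin (m + 1)) : (j : ℕ) = (i.castSucc : ℕ) + 1 ↔ j = i.succ := by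
    simp [Fin.ext_iff]
  have hlast : ¬ ∃ j : Fin (m + 1), (j : ℕ) = (Fin.last m : ℕ) + 1 ∧ π j < π (Fin.last m) :=
    fun ⟨j, hj, _⟩ => by simp at hj; omega
  simp only [hsucc, exists_eq_left, hlast, if_false, add_zero]

lemma descents_zero (π : Perm (Fin 0)) : descents 0 π = 0 := by
  simp [descents]

lemma descents_revPerm_mul_add (n : ℕ) (π : Perm (Fin n)) :
    descents n (Fin.revPerm * π) + descents n π = n - 1 := by
  cases n with
  | zero => simp [descents_zero]
  | succ m =>
    have hne (i : Fin m) : π i.succ ≠ π i.castSucc :=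
      fun h => Fin.castSucc_lt_succ.ne' (π.injective h)
    rw [descents_succ_eq_sum, descents_succ_eq_sum, ← sum_add_distrib]
    simp only [Perm.mul_apply, Fin.revPerm_apply, Fin.rev_lt_rev]
    calc _ = ∑ _i : Fin m, 1 := sum_congr rfl fun i _ => by
            rcases (hne i).lt_or_gt with h | h <;> simp [h, h.not_gt]
      _ = m + 1 - 1 := by simp

lemma A_succ_eq_card (n : ℕ) (d : ℤ) (c : ℕ) :
    A (n + 1) d (c + 1) =
      #{π : Perm (Fin (n + 1)) | (descents (n + 1) π : ℤ) = d ∧ (π 0 : ℕ) = c} := by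
  refine congrArg card (filter_congr fun π _ => and_congr_right fun _ => ?_)
  constructor
  · rintro ⟨i, hi, hπ⟩
    obtain rfl : i = 0 := Fin.ext hi
    omega
  · exact fun h => ⟨0, rfl, by omega⟩

lemma A_rev (m : ℕ) (d : ℤ) {c : ℕ} (hc : c ≤ m) :
    A (m + 1) d (c + 1) = A (m + 1) (m - d) (m - c + 1) := by
  rw [A_succ_eq_card, A_succ_eq_card]
  refine card_equiv (Equiv.mulLeft Fin.revPerm) fun π => ?_
  have hdesc := descents_revPerm_mul_add (m + 1) π
  have hπ0 := (π 0).isLt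
  simp only [mem_filter, mem_univ, true_and, Equiv.coe_mulLeft, Perm.mul_apply,
    Fin.revPerm_apply, Fin.val_rev]
  omega

lemma A_of_neg {n : ℕ} {d : ℤ} (hd : d < 0) (k : ℕ) : A n d k = 0 := by
  refine card_eq_zero.2 (filter_eq_empty_iff.2 fun π _ h => ?_)
  omega

lemma A_of_lt {n : ℕ} (d : ℤ) {k : ℕ} (hk : n < k) : A n d k = 0 := by
  refine card_eq_zero.2 (filter_eq_empty_iff.2 fun π _ ⟨_, i, _, hi⟩ => ?_)
  have := (π i).isLt
  omega

lemma A_zero_one_pos {n : ℕ} (hn : 0 < n) : 0 < A n 0 1 := by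
  obtain ⟨m, rfl⟩ : ∃ m, n = m + 1 := ⟨n - 1, by omega⟩
  rw [A_succ_eq_card]
  refine card_pos.2 ⟨1, mem_filter.2 ⟨mem_univ _, ?_, rfl⟩⟩
  simp [descents_succ_eq_sum, Fin.castSucc_lt_succ.not_gt]

/-- The permutation with first value `c` whose remaining values `c.succAbove (σ i)` are ordered as
`σ` orders them. -/
def consPerm {n : ℕ} (c : Fin (n + 1)) (σ : Perm (Fin n)) : Perm (Fin (n + 1)) :=
  (finSuccEquiv n).trans ((Equiv.optionCongr σ).trans (finSuccEquiv' c).symm)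

@[simp] lemma consPerm_zero {n : ℕ} (c : Fin (n + 1)) (σ : Perm (Fin n)) : consPerm c σ 0 = c := by
  simp [consPerm]

@[simp] lemma consPerm_succ {n : ℕ} (c : Fin (n + 1)) (σ : Perm (Fin n)) (i : Fin n) :
    consPerm c σ i.succ = c.succAbove (σ i) := by
  simp [consPerm]

lemma consPerm_bijective (n : ℕ) :
    Function.Bijective fun p : Fin (n + 1) × Perm (Fin n) => consPerm p.1 p.2 := by
  refine (Fintype.bijective_iff_injective_and_card _).2 ⟨fun ⟨c, σ⟩ ⟨c', σ'⟩ h => ?_, ?_⟩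
  · obtain rfl : c = c' := by simpa using congrArg (· 0) h
    refine Prod.ext rfl (Equiv.ext fun i => Fin.succAbove_right_injective (p := c) ?_)
    simpa using congrArg (· i.succ) h
  · simp [Fintype.card_perm, Nat.factorial_succ]

lemma descents_consPerm {m : ℕ} (c : Fin (m + 2)) (σ : Perm (Fin (m + 1))) :
    (descents (m + 2) (consPerm c σ) : ℤ) =
      descents (m + 1) σ + if (σ 0 : ℕ) < c then 1 else 0 := by
  rw [descents_succ_eq_sum, descents_succ_eq_sum, Fin.sum_univ_succ, add_comm]
  simp only [← Fin.succ_castSucc, Fin.castSucc_zero, consPerm_succ, consPerm_zero,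
    Fin.succAbove_lt_succAbove_iff, Fin.succAbove_lt_iff_castSucc_lt]
  push_cast [apply_ite (Nat.cast : ℕ → ℤ), Fin.lt_def, Fin.val_castSucc]
  rfl

lemma card_descents_first_eq {m : ℕ} (d : ℤ) {c : ℕ} (hc : c < m + 2) :
    #{π : Perm (Fin (m + 2)) | (descents (m + 2) π : ℤ) = d ∧ (π 0 : ℕ) = c} =
      #{σ : Perm (Fin (m + 1)) |
        (descents (m + 1) σ : ℤ) + (if (σ 0 : ℕ) < c then 1 else 0) = d} := by
  symm
  refine card_nbij (consPerm ⟨c, hc⟩) (fun σ hσ => ?_) (fun σ _ τ _ h => ?_) (fun π hπ => ?_)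
  · simp_all [descents_consPerm]
  · exact congrArg Prod.snd
      ((consPerm_bijective (m + 1)).1 (a₁ := (⟨c, hc⟩, σ)) (a₂ := (⟨c, hc⟩, τ)) h)
  · obtain ⟨⟨c', σ⟩, rfl⟩ := (consPerm_bijective (m + 1)).2 π
    simp only [coe_filter, mem_univ, true_and, Set.mem_ofPred_eq, consPerm_zero,
      descents_consPerm] at hπ
    obtain ⟨rfl, rfl⟩ := hπ
    exact ⟨σ, by simp, rfl⟩

lemma A_succ_succ (m : ℕ) (d : ℤ) {c : ℕ} (hc : c < m + 2) :
    A (m + 2) d (c + 1) =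
      ∑ j ∈ range (m + 1), A (m + 1) (if j < c then d - 1 else d) (j + 1) := by
  rw [A_succ_eq_card, card_descents_first_eq d hc,
    card_eq_sum_card_fiberwise (f := fun σ => (σ 0 : ℕ)) (t := range (m + 1))
      (fun σ _ => mem_range.2 (σ 0).isLt)]
  refine sum_congr rfl fun j _ => ?_
  rw [A_succ_eq_card, filter_filter]
  refine congrArg card (filter_congr fun σ _ => ?_)
  constructor <;> rintro ⟨h, rfl⟩ <;> refine ⟨?_, rfl⟩ <;> split_ifs at h ⊢ <;> omega

section Antisymmetric

variable {f : ℕ → ℤ} {N : ℕ}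

lemma sum_Ico_eq_neg_sum_range_of_antisymm (hf : ∀ j < N, f (N - 1 - j) = -f j) {c : ℕ}
    (hc : c ≤ N) : ∑ j ∈ Ico c N, f j = -∑ j ∈ range (N - c), f j := by
  rcases N with _ | M
  · obtain rfl : c = 0 := by omega
    simp
  calc ∑ j ∈ Ico c (M + 1), f j = ∑ j ∈ Ico c (M + 1), -f (M - j) :=
        sum_congr rfl fun j hj => by
          rw [← Nat.add_sub_cancel M 1, hf j (mem_Ico.1 hj).2, neg_neg]
    _ = -∑ j ∈ range (M + 1 - c), f j := by
      rw [sum_neg_distrib, sum_Ico_reflect f c le_rfl, Nat.sub_self, range_eq_Ico]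

lemma sum_range_nonpos_of_antisymm (hf : ∀ j < N, f (N - 1 - j) = -f j)
    (hneg : ∀ j, 2 * j + 1 < N → f j ≤ 0) {c : ℕ} (hc : c ≤ N) :
    ∑ j ∈ range c, f j ≤ 0 := by
  have hshort : ∀ r, 2 * r ≤ N → ∑ j ∈ range r, f j ≤ 0 := fun r hr =>
    sum_nonpos fun j hj => hneg j (by have := mem_range.1 hj; omega)
  rcases le_or_gt (2 * c) N with h | h
  · exact hshort c h
  · have htotal := sum_Ico_eq_neg_sum_range_of_antisymm hf (Nat.zero_le N)
    have hsplit := sum_range_add_sum_Ico f hc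
    rw [sum_Ico_eq_neg_sum_range_of_antisymm hf hc] at hsplit
    rw [← range_eq_Ico, Nat.sub_zero] at htotal
    linarith [hshort (N - c) (by omega)]

lemma sum_Ico_nonneg_of_antisymm (hf : ∀ j < N, f (N - 1 - j) = -f j)
    (hneg : ∀ j, 2 * j + 1 < N → f j ≤ 0) {c : ℕ} (hc : c ≤ N) :
    0 ≤ ∑ j ∈ Ico c N, f j := by
  rw [sum_Ico_eq_neg_sum_range_of_antisymm hf hc, neg_nonneg]
  exact sum_range_nonpos_of_antisymm hf hneg (Nat.sub_le N c)

end Antisymmetric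

lemma sum_range_ite_lt {M : Type*} [AddCommMonoid M] (f g : ℕ → M) {c N : ℕ} (hc : c ≤ N) :
    ∑ j ∈ range N, (if j < c then f j else g j) = ∑ j ∈ range c, f j + ∑ j ∈ Ico c N, g j := by
  rw [← sum_range_add_sum_Ico _ hc]
  congr 1
  · exact sum_congr rfl fun j hj => if_pos (mem_range.1 hj)
  · exact sum_congr rfl fun j hj => if_neg (mem_Ico.1 hj).1.not_gt

lemma A_succ_succ_eq_sum_add_sum (m : ℕ) (d : ℤ) {c : ℕ} (hc : c ≤ m + 1) :
    (A (m + 2) d (c + 1) : ℤ) =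
      ∑ j ∈ range c, (A (m + 1) (d - 1) (j + 1) : ℤ) +
        ∑ j ∈ Ico c (m + 1), (A (m + 1) d (j + 1) : ℤ) := by
  rw [A_succ_succ m d (by omega), ← sum_range_ite_lt _ _ hc, Nat.cast_sum]
  exact sum_congr rfl fun j _ => by split_ifs <;> rfl

def descentDiff (n : ℕ) (d : ℤ) (j : ℕ) : ℤ := (A n d (j + 1) : ℤ) - A n (d - 1) (j + 1)

lemma descentDiff_succ_succ (m : ℕ) (d : ℤ) {c : ℕ} (hc : c ≤ m + 1) :
    descentDiff (m + 2) d c =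
      ∑ j ∈ range c, descentDiff (m + 1) (d - 1) j +
        ∑ j ∈ Ico c (m + 1), descentDiff (m + 1) d j := by
  simp only [descentDiff, A_succ_succ_eq_sum_add_sum m _ hc, sum_sub_distrib]
  ring

lemma A_succ_succ_sub_A (m : ℕ) (d : ℤ) {c : ℕ} (hc : c < m + 1) :
    (A (m + 2) d (c + 2) : ℤ) = A (m + 2) d (c + 1) - descentDiff (m + 1) d c := by
  rw [A_succ_succ_eq_sum_add_sum m d hc, A_succ_succ_eq_sum_add_sum m d hc.le, sum_range_succ,
    sum_eq_sum_Ico_succ_bot hc, descentDiff]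
  ring

lemma descentDiff_rev {n : ℕ} (d : ℤ) {j : ℕ} (hj : j < n) :
    descentDiff n d j = -descentDiff n (n - d) (n - 1 - j) := by
  obtain ⟨m, rfl⟩ : ∃ m, n = m + 1 := ⟨n - 1, by omega⟩
  simp only [descentDiff, A_rev m _ (by omega : j ≤ m), Nat.add_sub_cancel]
  push_cast
  ring_nf

lemma descentDiff_of_le {n : ℕ} (d : ℤ) {j : ℕ} (hj : n ≤ j) : descentDiff n d j = 0 := by
  simp [descentDiff, A_of_lt _ (by omega : n < j + 1)]

lemma descentDiff_nonneg_of_nonpos {n : ℕ} {d : ℤ} (hd : d ≤ 0) (j : ℕ) :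
    0 ≤ descentDiff n d j := by
  simp [descentDiff, A_of_neg (by omega : d - 1 < 0)]

lemma descentDiff_zero_zero_pos {n : ℕ} (hn : 0 < n) : 0 < descentDiff n 0 0 := by
  simpa [descentDiff, A_of_neg (by norm_num : (-1 : ℤ) < 0)] using A_zero_one_pos hn

section Inequalities

variable {n : ℕ} {d : ℤ}

/-- With `g = descentDiff (2d - 1) (d - 1) ≥ 0`, the recursion and `descentDiff_rev` give
`descentDiff (2d) d j = ∑ i < j, g i - ∑ i < 2d - 1 - j, g i`. -/
lemma descentDiff_nonpos_of_two_mul_eq (hn : (n : ℤ) = 2 * d)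
    (h0 : ∀ j, 0 ≤ descentDiff (n - 1) (d - 1) j) {j : ℕ} (hj : 2 * j + 1 < n) :
    descentDiff n d j ≤ 0 := by
  obtain ⟨m, rfl⟩ : ∃ m, n = m + 2 := ⟨n - 2, by omega⟩
  set g := descentDiff (m + 1) (d - 1)
  have hg (i : ℕ) : 0 ≤ g i := h0 i
  have hrev : ∀ i ∈ Ico j (m + 1), descentDiff (m + 1) d i = -g (m - i) := fun i hi => by
    rw [descentDiff_rev d (mem_Ico.1 hi).2, show ((m + 1 : ℕ) : ℤ) - d = d - 1 by push_cast; omega,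
      show m + 1 - 1 - i = m - i by omega]
  have hsplit := sum_range_add_sum_Ico g (by omega : j ≤ m + 1 - j)
  rw [descentDiff_succ_succ m d (by omega), sum_congr rfl hrev, sum_neg_distrib,
    sum_Ico_reflect g j le_rfl, Nat.sub_self, ← range_eq_Ico, ← hsplit]
  linarith [sum_nonneg fun i (_ : i ∈ Ico j (m + 1 - j)) => hg i]

lemma sum_Ico_descentDiff_nonneg_of_two_mul_eq (hn : (n : ℤ) = 2 * d)
    (h0 : ∀ j, 0 ≤ descentDiff (n - 1) (d - 1) j) {c : ℕ} (hc : c ≤ n) :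
    0 ≤ ∑ j ∈ Ico c n, descentDiff n d j := by
  refine sum_Ico_nonneg_of_antisymm (fun j hj => ?_)
    (fun j hj => descentDiff_nonpos_of_two_mul_eq hn h0 hj) hc
  rw [descentDiff_rev d (by omega : n - 1 - j < n), Nat.sub_sub_self (by omega : j ≤ n - 1)]
  congr 2
  omega

theorem descentDiff_nonneg : ∀ {n : ℕ} {d : ℤ} (j : ℕ), 2 * d < n → 0 ≤ descentDiff n d j
  | 0, _, j, h | 1, _, j, h => descentDiff_nonneg_of_nonpos (by omega) j
  | m + 2, d, j, h => by
    rcases le_or_gt d 0 with hd | hd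
    · exact descentDiff_nonneg_of_nonpos hd j
    rcases le_or_gt (m + 2) j with hj | hj
    · exact (descentDiff_of_le d hj).ge
    rw [descentDiff_succ_succ m d (by omega)]
    refine add_nonneg (sum_nonneg fun i _ => descentDiff_nonneg i (by omega)) ?_
    rcases (by omega : 2 * d < m + 1 ∨ ((m + 1 : ℕ) : ℤ) = 2 * d) with h' | h'
    · exact sum_nonneg fun i _ => descentDiff_nonneg i h'
    · exact sum_Ico_descentDiff_nonneg_of_two_mul_eq h'
        (fun i => descentDiff_nonneg (n := m) i (by omega)) (by omega)

lemma sum_Ico_descentDiff_nonneg (hd : 2 * d ≤ n) {c : ℕ} (hc : c ≤ n) :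
    0 ≤ ∑ j ∈ Ico c n, descentDiff n d j := by
  rcases hd.lt_or_eq with hd | hd
  · exact sum_nonneg fun j _ => descentDiff_nonneg j hd
  · exact sum_Ico_descentDiff_nonneg_of_two_mul_eq hd.symm
      (fun j => descentDiff_nonneg j (by omega)) hc

-- `j = 0` at size `n` needs `j = 1` at size `n - 1`, and `j > 0` needs `j = 0` there.
theorem descentDiff_pos : ∀ {n : ℕ} {d : ℤ} {j : ℕ}, 1 ≤ d → 2 * d < n → j < n →
    0 < j ∨ 2 * d + 2 ≤ n → 0 < descentDiff n d j
  | 0, _, _, _, h, _, _ | 1, _, _, _, h, _, _ => by omega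
  | m + 2, d, 0, hd, _, _, hj => by
    rw [descentDiff_succ_succ m d (Nat.zero_le _), sum_range_zero, zero_add]
    calc 0 < descentDiff (m + 1) d 1 :=
          descentDiff_pos hd (by omega) (by omega) (Or.inl Nat.one_pos)
      _ ≤ ∑ j ∈ Ico 0 (m + 1), descentDiff (m + 1) d j :=
        single_le_sum (fun j _ => descentDiff_nonneg j (by omega)) (by simp; omega)
  | m + 2, d, j + 1, hd, h, hjn, _ => by
    have hfirst : 0 < descentDiff (m + 1) (d - 1) 0 := by
      rcases hd.eq_or_lt with rfl | hd
      · exact descentDiff_zero_zero_pos (by omega)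
      · exact descentDiff_pos (by omega) (by omega) (by omega) (Or.inr (by omega))
    rw [descentDiff_succ_succ m d (by omega)]
    have hle : descentDiff (m + 1) (d - 1) 0 ≤ ∑ i ∈ range (j + 1), descentDiff (m + 1) (d - 1) i :=
      single_le_sum (fun i _ => descentDiff_nonneg i (by omega)) (mem_range.2 j.succ_pos)
    linarith [sum_Ico_descentDiff_nonneg (n := m + 1) (d := d) (by omega) (c := j + 1) (by omega)]

end Inequalities

theorem stmt14_general (n : ℕ) (d : ℕ) (hd1 : 1 ≤ d) (hd2 : 2 * d ≤ n - 3) :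
    ∀ k : ℕ, 1 ≤ k → k ≤ n - 1 → A n (d : ℤ) (k + 1) < A n (d : ℤ) k := by
  intro k hk1 hk2
  obtain ⟨m, rfl⟩ : ∃ m, n = m + 2 := ⟨n - 2, by omega⟩
  obtain ⟨c, rfl⟩ : ∃ c, k = c + 1 := ⟨k - 1, by omega⟩
  have hstep := A_succ_succ_sub_A m d (by omega : c < m + 1)
  have hpos := descentDiff_pos (n := m + 1) (d := d) (j := c) (by omega) (by omega) (by omega)
    (Or.inr (by omega))
  show A _ _ (c + 2) < _
  omega

theorem stmt14 (n : ℕ) (hn : 5 ≤ n) (d : ℕ) (hd1 : 1 ≤ d) (hd2 : 2 * d ≤ n - 3) :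
    ∀ k : ℕ, 1 ≤ k → k ≤ n - 1 → A n (d : ℤ) (k + 1) < A n (d : ℤ) k :=
  stmt14_general n d hd1 hd2
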